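/- Consider the Cox-Ingersoll-Ross SDE on M = {(x,z) ∈ ℝ² : x > 0} with m = 1 driving noise, coefficients μ(x,z) = (ax + b, 1) and σ(x,z) = (σ₀√x, 0)ᵀ, where a, b, σ₀ ∈ ℝ with σ₀ ≠ 0. For every k ∈ ℝ, the infinitesimal stochastic transformations V₁ = (Y₁, 0, 0, H₁) with Y₁(x,z) = (e^{−kz}√x, 0) and H₁(x,z) = e^{−kz}[ (a+2k)/(2σ₀) + (σ₀² − 4b)/(8σ₀x) ], and V₂ = (Y₂, 0, 0, 0) with Y₂(x,z) = (0,1), are infinitesimal symmetries of (μ,σ), i.e. they satisfy the determining equations; moreover [V₁,V₂] = k·V₁, so span_ℝ{V₁,V₂} is a two-dimensional solvable Lie algebra of quasi Doob symmetries. -/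

import Mathlib

open Matrix

/-- Partial derivative `∂ᵢ f` of a scalar function on `ℝⁿ`. -/
noncomputable def pd {n : ℕ} (i : Fin n) (f : (Fin n → ℝ) → ℝ) (x : Fin n → ℝ) : ℝ :=
  fderiv ℝ f x (Pi.single i 1)

/-- Action `Y(f) = Yⁱ ∂ᵢ f` of a vector field on a scalar function. -/
noncomputable def vfd {n : ℕ} (Y : (Fin n → ℝ) → Fin n → ℝ)
    (f : (Fin n → ℝ) → ℝ) (x : Fin n → ℝ) : ℝ :=
  ∑ j, Y x j * pd j f x

/-- Infinitesimal generator `L(f) = ½ (σσᵀ)^{ij} ∂ᵢ∂ⱼ f + μⁱ ∂ᵢ f` of the SDE `(μ,σ)`. -/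
noncomputable def gen {n m : ℕ} (μ : (Fin n → ℝ) → Fin n → ℝ)
    (σ : (Fin n → ℝ) → Matrix (Fin n) (Fin m) ℝ)
    (f : (Fin n → ℝ) → ℝ) (x : Fin n → ℝ) : ℝ :=
  (1 / 2) * ∑ i, ∑ j, (∑ α, σ x i α * σ x j α) * pd i (pd j f) x
    + ∑ i, μ x i * pd i f x

/-- Entrywise smoothness of a vector-valued function on a set. -/
def SmoothVec {n k : ℕ} (M : Set (Fin n → ℝ)) (f : (Fin n → ℝ) → Fin k → ℝ) : Prop :=
  ∀ i, ContDiffOn ℝ (⊤ : ℕ∞) (fun x => f x i) M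

/-- Entrywise smoothness of a matrix-valued function on a set. -/
def SmoothMat {n k l : ℕ} (M : Set (Fin n → ℝ))
    (f : (Fin n → ℝ) → Matrix (Fin k) (Fin l) ℝ) : Prop :=
  ∀ i j, ContDiffOn ℝ (⊤ : ℕ∞) (fun x => f x i j) M

/-- The determining equations: `V = (Y,C,τ,H)` is an infinitesimal symmetry of the SDE
`(μ,σ)` on `M`, i.e. `Y(μ) − L(Y) − σ·H + τμ = 0` and `[Y,σ] + ½τσ + σ·C = 0` on `M`. -/
def DetEqs {n m : ℕ} (M : Set (Fin n → ℝ))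
    (μ : (Fin n → ℝ) → Fin n → ℝ) (σ : (Fin n → ℝ) → Matrix (Fin n) (Fin m) ℝ)
    (Y : (Fin n → ℝ) → Fin n → ℝ) (C : (Fin n → ℝ) → Matrix (Fin m) (Fin m) ℝ)
    (τ : (Fin n → ℝ) → ℝ) (H : (Fin n → ℝ) → Fin m → ℝ) : Prop :=
  (∀ x ∈ M, ∀ i, vfd Y (fun y => μ y i) x - gen μ σ (fun y => Y y i) x
      - (∑ α, σ x i α * H x α) + τ x * μ x i = 0) ∧
  (∀ x ∈ M, ∀ i, ∀ α, vfd Y (fun y => σ y i α) x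
      - (∑ j, σ x j α * pd j (fun y => Y y i) x)
      + (1 / 2) * τ x * σ x i α + (∑ β, σ x i β * C x β α) = 0)

/-- First component (`Y`-part) of the bracket of two infinitesimal stochastic
transformations: `[Y₁,Y₂]`. -/
noncomputable def brY {n : ℕ} (Y₁ Y₂ : (Fin n → ℝ) → Fin n → ℝ) (x : Fin n → ℝ) :
    Fin n → ℝ := fun i =>
  vfd Y₁ (fun y => Y₂ y i) x - vfd Y₂ (fun y => Y₁ y i) x

/-- Second component (`C`-part) of the bracket: `Y₁(C₂) − Y₂(C₁) − (C₁C₂ − C₂C₁)`. -/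
noncomputable def brC {n m : ℕ} (Y₁ Y₂ : (Fin n → ℝ) → Fin n → ℝ)
    (C₁ C₂ : (Fin n → ℝ) → Matrix (Fin m) (Fin m) ℝ) (x : Fin n → ℝ) :
    Matrix (Fin m) (Fin m) ℝ :=
  Matrix.of fun a b =>
    vfd Y₁ (fun y => C₂ y a b) x - vfd Y₂ (fun y => C₁ y a b) x
      - ((C₁ x * C₂ x) a b - (C₂ x * C₁ x) a b)

/-- Third component (`τ`-part) of the bracket: `Y₁(τ₂) − Y₂(τ₁)`. -/
noncomputable def brTau {n : ℕ} (Y₁ Y₂ : (Fin n → ℝ) → Fin n → ℝ)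
    (τ₁ τ₂ : (Fin n → ℝ) → ℝ) (x : Fin n → ℝ) : ℝ :=
  vfd Y₁ τ₂ x - vfd Y₂ τ₁ x

/-- Fourth component (`H`-part) of the bracket:
`Y₁(H₂) − Y₂(H₁) − (−τ₁/2 + C₁)·H₂ + (−τ₂/2 + C₂)·H₁`. -/
noncomputable def brH {n m : ℕ} (Y₁ Y₂ : (Fin n → ℝ) → Fin n → ℝ)
    (C₁ C₂ : (Fin n → ℝ) → Matrix (Fin m) (Fin m) ℝ)
    (τ₁ τ₂ : (Fin n → ℝ) → ℝ)
    (H₁ H₂ : (Fin n → ℝ) → Fin m → ℝ) (x : Fin n → ℝ) : Fin m → ℝ := fun a =>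
  vfd Y₁ (fun y => H₂ y a) x - vfd Y₂ (fun y => H₁ y a) x
    - ((-(τ₁ x) / 2) * H₂ x a + ∑ b, C₁ x a b * H₂ x b)
    + ((-(τ₂ x) / 2) * H₁ x a + ∑ b, C₂ x a b * H₁ x b)

/-- The domain `M = {(x,z) : x > 0}` of the CIR model. -/
def Mcir : Set (Fin 2 → ℝ) := {p | 0 < p 0}

/-- The drift `μ(x,z) = (ax + b, 1)` of the CIR model. -/
noncomputable def μcir (a b : ℝ) : (Fin 2 → ℝ) → Fin 2 → ℝ :=
  fun p => ![a * p 0 + b, 1]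

/-- The diffusion coefficient `σ(x,z) = (σ₀√x, 0)ᵀ` of the CIR model. -/
noncomputable def σcir (σ₀ : ℝ) : (Fin 2 → ℝ) → Matrix (Fin 2) (Fin 1) ℝ :=
  fun p => Matrix.of fun i _ => ![σ₀ * Real.sqrt (p 0), 0] i

/-- The vector field `Y₁(x,z) = (e^{−kz}√x, 0)`. -/
noncomputable def Y1cir (k : ℝ) : (Fin 2 → ℝ) → Fin 2 → ℝ :=
  fun p => ![Real.exp (-k * p 1) * Real.sqrt (p 0), 0]

/-- The Girsanov component `H₁(x,z) = e^{−kz}[(a+2k)/(2σ₀) + (σ₀²−4b)/(8σ₀x)]`. -/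
noncomputable def H1cir (a b σ₀ k : ℝ) : (Fin 2 → ℝ) → Fin 1 → ℝ :=
  fun p _ => Real.exp (-k * p 1) *
    ((a + 2 * k) / (2 * σ₀) + (σ₀ ^ 2 - 4 * b) / (8 * σ₀ * p 0))

/-- The vector field `Y₂(x,z) = (0,1)`. -/
noncomputable def Y2cir : (Fin 2 → ℝ) → Fin 2 → ℝ := fun _ => ![0, 1]

/-!
On `x > 0` every coefficient is either independent of `z` or of the form `e^{-kz} g(x)` with `g`
smooth, so all partial derivatives are explicit and each determining equation reduces pointwise
to a rational identity in `√x`. Because `Y₂ = ∂_z` and `∂_z e^{-kz} = -k e^{-kz}`, bracketing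
with `V₂` multiplies `V₁` by `k`. The quasi Doob potential `k₁` is obtained by integrating
`H₁ / (σ₀√x)` in `x`.
-/

open Real

section

variable {n : ℕ}

theorem pd_const (i : Fin n) (c : ℝ) : pd i (fun _ : Fin n → ℝ => c) = fun _ => 0 :=
  funext fun _ => by simp [pd]

theorem Filter.EventuallyEq.pd_eq {f g : (Fin n → ℝ) → ℝ} {p : Fin n → ℝ}
    (h : f =ᶠ[nhds p] g) (i : Fin n) : pd i f p = pd i g p := by
  rw [pd, pd, h.fderiv_eq]

theorem pd_comp_apply {g : ℝ → ℝ} {g' : ℝ} {p : Fin n → ℝ} {i : Fin n}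
    (hg : HasDerivAt g g' (p i)) (j : Fin n) :
    pd j (fun q => g (q i)) p = (Pi.single i g' : Fin n → ℝ) j := by
  have hfd : HasFDerivAt (fun q => g (q i)) _ p := hg.hasFDerivAt.comp p (hasFDerivAt_apply i p)
  rw [pd, hfd.fderiv]
  by_cases hij : j = i
  · subst hij; simp
  · simp [hij, Ne.symm hij]

theorem differentiableAt_comp_apply {g : ℝ → ℝ} {p : Fin n → ℝ} {i : Fin n}
    (hg : DifferentiableAt ℝ g (p i)) : DifferentiableAt ℝ (fun q => g (q i)) p :=
  hg.comp p (differentiableAt_apply i p)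

theorem pd_mul {f g : (Fin n → ℝ) → ℝ} {p : Fin n → ℝ}
    (hf : DifferentiableAt ℝ f p) (hg : DifferentiableAt ℝ g p) (i : Fin n) :
    pd i (fun q => f q * g q) p = f p * pd i g p + g p * pd i f p := by
  rw [pd, pd, pd, fderiv_fun_mul hf hg]
  simp

theorem detEqs_zero_iff {m : ℕ} {M : Set (Fin n → ℝ)} {μ : (Fin n → ℝ) → Fin n → ℝ}
    {σ : (Fin n → ℝ) → Matrix (Fin n) (Fin m) ℝ} {Y : (Fin n → ℝ) → Fin n → ℝ}
    {H : (Fin n → ℝ) → Fin m → ℝ} :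
    DetEqs M μ σ Y (fun _ => 0) (fun _ => 0) H ↔
      (∀ x ∈ M, ∀ i, vfd Y (fun y => μ y i) x - gen μ σ (fun y => Y y i) x
        = ∑ α, σ x i α * H x α) ∧
      (∀ x ∈ M, ∀ i α, vfd Y (fun y => σ y i α) x = ∑ j, σ x j α * pd j (fun y => Y y i) x) := by
  simp only [DetEqs, zero_mul, add_zero, mul_zero, Matrix.zero_apply, Finset.sum_const_zero,
    sub_eq_zero]

end

section CIR

variable {a b σ₀ k : ℝ} {g : ℝ → ℝ} {g' : ℝ} {p : Fin 2 → ℝ}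

theorem isOpen_Mcir : IsOpen Mcir :=
  isOpen_Ioi.preimage (continuous_apply 0)

theorem hasDerivAt_exp_neg_mul (z : ℝ) :
    HasDerivAt (fun z => exp (-k * z)) (-k * exp (-k * z)) z := by
  simpa [mul_comm] using ((hasDerivAt_id z).const_mul (-k)).exp

theorem pd_exp_mul (hg : HasDerivAt g g' (p 0)) (i : Fin 2) :
    pd i (fun q => exp (-k * q 1) * g (q 0)) p
      = exp (-k * p 1) * (Pi.single 0 g' : Fin 2 → ℝ) i
        + g (p 0) * (Pi.single 1 (-k * exp (-k * p 1)) : Fin 2 → ℝ) i := by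
  have hexp := hasDerivAt_exp_neg_mul (k := k) (p 1)
  rw [pd_mul (differentiableAt_comp_apply hexp.differentiableAt)
    (differentiableAt_comp_apply hg.differentiableAt), pd_comp_apply hg, pd_comp_apply hexp]

theorem pd_zero_exp_mul (hg : HasDerivAt g g' (p 0)) :
    pd 0 (fun q => exp (-k * q 1) * g (q 0)) p = exp (-k * p 1) * g' := by
  rw [pd_exp_mul hg, Pi.single_eq_same, Pi.single_eq_of_ne zero_ne_one, mul_zero, add_zero]

theorem pd_one_exp_mul (hg : DifferentiableAt ℝ g (p 0)) :
    pd 1 (fun q => exp (-k * q 1) * g (q 0)) p = -k * (exp (-k * p 1) * g (p 0)) := by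
  rw [pd_exp_mul hg.hasDerivAt, Pi.single_eq_of_ne one_ne_zero, Pi.single_eq_same]
  ring

theorem μcir_apply_one (p : Fin 2 → ℝ) : μcir a b p 1 = 1 := rfl

theorem σcir_apply_one (p : Fin 2 → ℝ) (α : Fin 1) : σcir σ₀ p 1 α = 0 := rfl

theorem Y1cir_apply_one (p : Fin 2 → ℝ) : Y1cir k p 1 = 0 := rfl

theorem μcir_apply_zero (p : Fin 2 → ℝ) : μcir a b p 0 = a * p 0 + b := rfl

theorem σcir_apply_zero (p : Fin 2 → ℝ) (α : Fin 1) : σcir σ₀ p 0 α = σ₀ * √(p 0) := rfl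

theorem Y1cir_apply_zero (p : Fin 2 → ℝ) : Y1cir k p 0 = exp (-k * p 1) * √(p 0) := rfl

theorem Y2cir_apply_zero (p : Fin 2 → ℝ) : Y2cir p 0 = 0 := rfl

theorem Y2cir_apply_one (p : Fin 2 → ℝ) : Y2cir p 1 = 1 := rfl

theorem pd_μcir_zero (i : Fin 2) :
    pd i (fun y => μcir a b y 0) p = (Pi.single 0 a : Fin 2 → ℝ) i := by
  have h : HasDerivAt (fun u => a * u + b) a (p 0) := by
    simpa using ((hasDerivAt_id (p 0)).const_mul a).add_const b
  exact pd_comp_apply h i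

theorem pd_σcir_zero (hp : 0 < p 0) (α : Fin 1) (i : Fin 2) :
    pd i (fun y => σcir σ₀ y 0 α) p = (Pi.single 0 (σ₀ / (2 * √(p 0))) : Fin 2 → ℝ) i := by
  have h := (hasDerivAt_sqrt hp.ne').const_mul σ₀
  rw [mul_one_div] at h
  exact pd_comp_apply h i

theorem pd_zero_Y1cir (hp : 0 < p 0) :
    pd 0 (fun y => Y1cir k y 0) p = exp (-k * p 1) * (2 * √(p 0))⁻¹ := by
  have h := hasDerivAt_sqrt hp.ne'
  rw [one_div] at h
  exact pd_zero_exp_mul h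

theorem pd_one_Y1cir (hp : 0 < p 0) : pd 1 (fun y => Y1cir k y 0) p = -k * Y1cir k p 0 :=
  pd_one_exp_mul (hasDerivAt_sqrt hp.ne').differentiableAt

theorem pd_zero_pd_zero_Y1cir (hp : 0 < p 0) :
    pd 0 (pd 0 fun y => Y1cir k y 0) p = -exp (-k * p 1) / (4 * p 0 * √(p 0)) := by
  have hev : (pd 0 fun y => Y1cir k y 0) =ᶠ[nhds p] fun q => exp (-k * q 1) * (2 * √(q 0))⁻¹ := by
    filter_upwards [isOpen_Mcir.mem_nhds hp] with q hq
    exact pd_zero_Y1cir hq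
  have hs : 0 < √(p 0) := sqrt_pos.2 hp
  have h : HasDerivAt (fun u => (2 * √u)⁻¹) _ (p 0) :=
    ((hasDerivAt_sqrt hp.ne').const_mul 2).inv (by positivity)
  rw [hev.pd_eq, pd_zero_exp_mul h]
  field_simp
  rw [sq_sqrt hp.le]
  ring

theorem pd_one_H1cir (hσ₀ : σ₀ ≠ 0) (hp : 0 < p 0) (α : Fin 1) :
    pd 1 (fun y => H1cir a b σ₀ k y α) p = -k * H1cir a b σ₀ k p α := by
  have h : DifferentiableAt ℝ (fun u => (a + 2 * k) / (2 * σ₀) + (σ₀ ^ 2 - 4 * b) / (8 * σ₀ * u))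
      (p 0) := by
    have : 8 * σ₀ * p 0 ≠ 0 := by positivity
    fun_prop (disch := exact this)
  exact pd_one_exp_mul h

theorem detEqs_Y1cir (hσ₀ : σ₀ ≠ 0) :
    DetEqs Mcir (μcir a b) (σcir σ₀) (Y1cir k) (fun _ => 0) (fun _ => 0) (H1cir a b σ₀ k) := by
  refine detEqs_zero_iff.2 ⟨fun x hx => ?_, fun x hx => ?_⟩
  all_goals have hx0 : 0 < x 0 := hx
  all_goals have hs : 0 < √(x 0) := sqrt_pos.2 hx0
  · simp only [Fin.forall_fin_two, vfd, gen, Fin.sum_univ_two, Fin.sum_univ_one, pd_μcir_zero,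
      pd_zero_Y1cir hx0, pd_one_Y1cir hx0, pd_zero_pd_zero_Y1cir hx0, μcir_apply_one,
      σcir_apply_one, Y1cir_apply_one, pd_const]
    refine ⟨?_, by simp⟩
    simp only [Pi.single_eq_same, zero_mul, mul_zero, add_zero, one_mul, μcir_apply_zero,
      σcir_apply_zero, Y1cir_apply_zero, H1cir]
    field_simp
    rw [sq_sqrt hx0.le]
    ring
  · simp only [Fin.forall_fin_two, Fin.forall_fin_one, vfd, Fin.sum_univ_two, pd_σcir_zero hx0,
      pd_zero_Y1cir hx0, pd_one_Y1cir hx0, σcir_apply_one, Y1cir_apply_one, pd_const]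
    refine ⟨?_, by simp⟩
    simp [σcir, Y1cir]
    field_simp

theorem detEqs_Y2cir :
    DetEqs Mcir (μcir a b) (σcir σ₀) Y2cir (fun _ => 0) (fun _ => 0) (fun _ => 0) := by
  refine detEqs_zero_iff.2 ⟨fun x _ => ?_, fun x hx => ?_⟩
  · simp [Fin.forall_fin_two, vfd, gen, pd_μcir_zero, μcir_apply_one, Y2cir_apply_zero,
      Y2cir_apply_one, pd_const]
  · simp [Fin.forall_fin_two, vfd, pd_σcir_zero (σ₀ := σ₀) hx, σcir_apply_one, Y2cir_apply_zero,
      Y2cir_apply_one, pd_const]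

theorem brY_Y1cir_Y2cir (hp : 0 < p 0) (i : Fin 2) : brY (Y1cir k) Y2cir p i = k * Y1cir k p i := by
  revert i
  simp [Fin.forall_fin_two, brY, vfd, pd_one_Y1cir hp, Y1cir_apply_one, Y2cir_apply_zero,
    Y2cir_apply_one, pd_const]

theorem brH_Y1cir_Y2cir (hσ₀ : σ₀ ≠ 0) (hp : 0 < p 0) (α : Fin 1) :
    brH (Y1cir k) Y2cir (fun _ => 0) (fun _ => 0) (fun _ => 0) (fun _ => 0) (H1cir a b σ₀ k)
      (fun _ => 0) p α = k * H1cir a b σ₀ k p α := by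
  simp [brH, vfd, pd_one_H1cir hσ₀ hp, Y2cir_apply_zero, Y2cir_apply_one, pd_const]

noncomputable def k1cir (a b σ₀ k : ℝ) (p : Fin 2 → ℝ) : ℝ :=
  exp (-k * p 1) * ((a + 2 * k) / σ₀ ^ 2 * √(p 0) - (σ₀ ^ 2 - 4 * b) / (4 * σ₀ ^ 2) * (√(p 0))⁻¹)

theorem contDiffOn_k1cir {n : WithTop ℕ∞} : ContDiffOn ℝ n (k1cir a b σ₀ k) Mcir := by
  intro p hp
  have hp0 : 0 < p 0 := hp
  refine ContDiffAt.contDiffWithinAt ?_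
  unfold k1cir
  fun_prop (disch := simp [sqrt_ne_zero', hp0, hp0.ne'])

theorem H1cir_eq_σcir_mul_pd_k1cir (hσ₀ : σ₀ ≠ 0) (hp : 0 < p 0) (α : Fin 1) :
    H1cir a b σ₀ k p α = ∑ i, σcir σ₀ p i α * pd i (k1cir a b σ₀ k) p := by
  have hs : 0 < √(p 0) := sqrt_pos.2 hp
  have hsqrt := hasDerivAt_sqrt hp.ne'
  have hψ := (hsqrt.const_mul ((a + 2 * k) / σ₀ ^ 2)).sub
    ((hsqrt.inv hs.ne').const_mul ((σ₀ ^ 2 - 4 * b) / (4 * σ₀ ^ 2)))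
  have hk : pd 0 (k1cir a b σ₀ k) p = _ := pd_zero_exp_mul hψ
  simp only [Fin.sum_univ_two, σcir_apply_one, zero_mul, add_zero, hk]
  simp only [σcir_apply_zero, H1cir]
  field_simp
  rw [sq_sqrt hp.le]
  ring

theorem Y1cir_Y2cir_independent {c₁ c₂ : ℝ}
    (h : ∀ x ∈ Mcir, ∀ i, c₁ * Y1cir k x i + c₂ * Y2cir x i = 0) : c₁ = 0 ∧ c₂ = 0 := by
  have h1 : (![1, 0] : Fin 2 → ℝ) ∈ Mcir := show (0 : ℝ) < 1 by norm_num
  simpa [Y1cir, Y2cir] using And.intro (h _ h1 0) (h _ h1 1)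

end CIR

/-- For every `k ∈ ℝ`, `V₁ = (Y₁,0,0,H₁)` and `V₂ = (Y₂,0,0,0)` are infinitesimal symmetries
of the CIR model; moreover `[V₁,V₂] = k·V₁`, `V₁` is of quasi Doob type and `V₁, V₂` are
linearly independent, so `span{V₁,V₂}` is a two-dimensional solvable Lie algebra of quasi
Doob symmetries. -/
theorem statement19 (a b σ₀ k : ℝ) (hσ₀ : σ₀ ≠ 0) :
    DetEqs Mcir (μcir a b) (σcir σ₀) (Y1cir k)
      (fun _ => (0 : Matrix (Fin 1) (Fin 1) ℝ)) (fun _ => (0 : ℝ)) (H1cir a b σ₀ k) ∧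
    DetEqs Mcir (μcir a b) (σcir σ₀) Y2cir
      (fun _ => (0 : Matrix (Fin 1) (Fin 1) ℝ)) (fun _ => (0 : ℝ))
      (fun _ => (0 : Fin 1 → ℝ)) ∧
    (∀ x ∈ Mcir,
      (∀ i, brY (Y1cir k) Y2cir x i = k * Y1cir k x i) ∧
      (∀ p q, brC (Y1cir k) Y2cir (fun _ => (0 : Matrix (Fin 1) (Fin 1) ℝ))
          (fun _ => (0 : Matrix (Fin 1) (Fin 1) ℝ)) x p q = 0) ∧
      (brTau (Y1cir k) Y2cir (fun _ => (0 : ℝ)) (fun _ => (0 : ℝ)) x = 0) ∧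
      (∀ α, brH (Y1cir k) Y2cir (fun _ => (0 : Matrix (Fin 1) (Fin 1) ℝ))
          (fun _ => (0 : Matrix (Fin 1) (Fin 1) ℝ)) (fun _ => (0 : ℝ)) (fun _ => (0 : ℝ))
          (H1cir a b σ₀ k) (fun _ => 0) x α = k * H1cir a b σ₀ k x α)) ∧
    (∃ k₁ : (Fin 2 → ℝ) → ℝ, ContDiffOn ℝ (⊤ : ℕ∞) k₁ Mcir ∧
      ∀ x ∈ Mcir, ∀ α, H1cir a b σ₀ k x α = ∑ i, σcir σ₀ x i α * pd i k₁ x) ∧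
    (∀ c₁ c₂ : ℝ,
      (∀ x ∈ Mcir, ∀ i, c₁ * Y1cir k x i + c₂ * Y2cir x i = 0) → c₁ = 0 ∧ c₂ = 0) := by
  refine ⟨detEqs_Y1cir hσ₀, detEqs_Y2cir, fun x hx => ⟨brY_Y1cir_Y2cir hx, ?_, ?_,
    brH_Y1cir_Y2cir hσ₀ hx⟩, ⟨k1cir a b σ₀ k, contDiffOn_k1cir,
    fun x hx => H1cir_eq_σcir_mul_pd_k1cir hσ₀ hx⟩, fun _ _ => Y1cir_Y2cir_independent⟩
  · simp [brC, vfd, pd_const]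
  · simp [brTau, vfd, pd_const]
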